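/- Let g be a finite-dimensional real Lie algebra with inner product ⟨·,·⟩ that decomposes as an orthogonal direct sum g = b ⊕ u, where b is an abelian Lie subalgebra, u is an abelian Lie ideal, and ad_b is skew-adjoint with respect to ⟨·,·⟩ for every b ∈ b. Define the bilinear product x·y = ⁅p(x), y⁆, where p : g → b is the projection onto b along u. Then for all x,y,z ∈ g: x·y − y·x = ⁅x,y⁆, ⟨x·y, z⟩ + ⟨y, x·z⟩ = 0, and L_⁅x,y⁆ = L_x ∘ L_y − L_y ∘ L_x, where L_x(y) = x·y. -/
import Mathlib


/-- **Converse construction in Milnor's theorem.** If a finite-dimensional real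
Lie algebra with an inner product decomposes as an orthogonal direct sum
`g = b ⊕ u` (`b` abelian subalgebra, `u` abelian ideal, `ad_b` skew-adjoint for
`b ∈ b`), then the product `x·y = ⁅p(x), y⁆`, where `p` is the projection onto
`b` along `u`, is a flat Levi-Civita product. -/
theorem milnor_converse
    (g : Type*) [LieRing g] [LieAlgebra ℝ g] [FiniteDimensional ℝ g]
    (B : LinearMap.BilinForm ℝ g)
    (hsymm : ∀ x y : g, B x y = B y x)
    (hpos : ∀ x : g, x ≠ 0 → 0 < B x x)
    (b : LieSubalgebra ℝ g) (u : LieIdeal ℝ g)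
    (hb : ∀ x ∈ b, ∀ y ∈ b, ⁅x, y⁆ = (0 : g))
    (hu : ∀ x ∈ u, ∀ y ∈ u, ⁅x, y⁆ = (0 : g))
    (horth : ∀ x ∈ b, ∀ y ∈ u, B x y = 0)
    (hsup : (b : Submodule ℝ g) ⊔ (u : Submodule ℝ g) = ⊤)
    (hinf : (b : Submodule ℝ g) ⊓ (u : Submodule ℝ g) = ⊥)
    (hskew : ∀ x ∈ b, ∀ y z : g, B ⁅x, y⁆ z + B y ⁅x, z⁆ = 0)
    (p : g →ₗ[ℝ] g) (hp1 : ∀ x : g, p x ∈ b) (hp2 : ∀ x : g, x - p x ∈ u) :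
    (∀ x y : g, ⁅p x, y⁆ - ⁅p y, x⁆ = ⁅x, y⁆) ∧
    (∀ x y z : g, B ⁅p x, y⁆ z + B y ⁅p x, z⁆ = 0) ∧
    (∀ x y z : g, ⁅p ⁅x, y⁆, z⁆ = ⁅p x, ⁅p y, z⁆⁆ - ⁅p y, ⁅p x, z⁆⁆) := by
  have hbpp : ∀ x y : g, ⁅p x, p y⁆ = 0 := fun x y => hb _ (hp1 x) _ (hp1 y)
  have part1 : ∀ x y : g, ⁅p x, y⁆ - ⁅p y, x⁆ = ⁅x, y⁆ := by
    intro x y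
    have hdec : ⁅x, y⁆ = ⁅p x, p y⁆ + ⁅p x, y - p y⁆ + ⁅x - p x, p y⁆
        + ⁅x - p x, y - p y⁆ := by
      simp [lie_sub, sub_lie]
    rw [hdec, hbpp, hu _ (hp2 x) _ (hp2 y)]
    simp only [lie_sub, sub_lie, hbpp, sub_zero, zero_add, add_zero]
    rw [show ⁅x, p y⁆ = -⁅p y, x⁆ from (lie_skew _ _).symm]
    abel
  have pu : ∀ w : g, w ∈ u → p w = 0 := by
    intro w hw
    have h2 : p w ∈ (u : Submodule ℝ g) := by
      have := u.sub_mem hw (hp2 w)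
      simpa using this
    have hmem : p w ∈ (b : Submodule ℝ g) ⊓ (u : Submodule ℝ g) := ⟨hp1 w, h2⟩
    rw [hinf] at hmem
    simpa using hmem
  have hbr : ∀ x y : g, ⁅x, y⁆ ∈ u := by
    intro x y
    have h1 : ⁅p x, y - p y⁆ ∈ u := u.lie_mem (hp2 y)
    have h2 : ⁅x - p x, p y⁆ ∈ u := by
      have : ⁅p y, x - p x⁆ ∈ u := u.lie_mem (hp2 x)
      have := u.neg_mem this
      simpa [← lie_skew (p y) (x - p x)] using this
    have hdec : ⁅x, y⁆ = ⁅p x, p y⁆ + ⁅p x, y - p y⁆ + ⁅x - p x, p y⁆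
        + ⁅x - p x, y - p y⁆ := by
      simp [lie_sub, sub_lie]
    rw [hdec, hbpp, hu _ (hp2 x) _ (hp2 y)]
    simpa using u.add_mem h1 h2
  refine ⟨part1, fun x y z => hskew _ (hp1 x) y z, ?_⟩
  intro x y z
  rw [pu _ (hbr x y)]
  rw [← lie_lie, hbpp]
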